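/- Let G be a graph and u, v ∈ V(G) with dist_G(u,v) ≥ 3, and let H = G ∘ uv be obtained from G by identifying u and v (replacing them by a new vertex adjacent to all neighbors of u or v). Then h(G) ≤ h(H). -/

import Mathlib

/-!
Send `v` to `u` and fix every other vertex. Since `u` and `v` are not adjacent, this is a
homomorphism `G →g G ∘ uv`; since they have no common neighbour, it is injective on edges, as two
edges with the same image would be `u w` and `v w`. Composing a harmonious colouring of `G ∘ uv`
with a homomorphism that is injective on edges gives a harmonious colouring of `G`.
-/

def IsHarmonious {V : Type*} {α : Type*} (G : SimpleGraph V) (c : V → α) : Prop :=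
  (∀ ⦃u v : V⦄, G.Adj u v → c u ≠ c v) ∧
  ∀ ⦃u v x y : V⦄, G.Adj u v → G.Adj x y →
    s(c u, c v) = s(c x, c y) → s(u, v) = s(x, y)

noncomputable def hchrom {V : Type*} [Fintype V] (G : SimpleGraph V) : ℕ :=
  sInf {k | ∃ c : V → Fin k, IsHarmonious G c}

def DistAtLeastThree {V : Type*} (G : SimpleGraph V) (u v : V) : Prop :=
  u ≠ v ∧ ¬ G.Adj u v ∧ ∀ w : V, ¬ (G.Adj u w ∧ G.Adj w v)

/-- The graph `G ∘ uv` obtained by identifying `v` with `u`: vertex `v` is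
removed and `u` becomes adjacent to all former neighbors of `v`. -/
def identify {V : Type*} (G : SimpleGraph V) (u v : V) :
    SimpleGraph {x : V // x ≠ v} where
  Adj a b := a ≠ b ∧
    (G.Adj a.1 b.1 ∨ (a.1 = u ∧ G.Adj v b.1) ∨ (b.1 = u ∧ G.Adj a.1 v))
  symm := by
    constructor
    rintro a b ⟨hab, h | ⟨h1, h2⟩ | ⟨h1, h2⟩⟩
    · exact ⟨hab.symm, Or.inl h.symm⟩
    · exact ⟨hab.symm, Or.inr (Or.inr ⟨h1, h2.symm⟩)⟩
    · exact ⟨hab.symm, Or.inr (Or.inl ⟨h1, h2.symm⟩)⟩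
  loopless := ⟨fun a h => h.1 rfl⟩

namespace IsHarmonious

variable {V W α : Type*} {G : SimpleGraph V} {H : SimpleGraph W}

lemma of_injective {c : V → α} (hc : Function.Injective c) : IsHarmonious G c :=
  ⟨fun _ _ h e => h.ne (hc e), fun _ _ _ _ _ _ e => Sym2.map.injective hc (by simpa using e)⟩

lemma comp {c : W → α} (hc : IsHarmonious H c) (f : G →g H)
    (hf : Set.InjOn (Sym2.map f) G.edgeSet) : IsHarmonious G (c ∘ f) :=
  ⟨fun _ _ h => hc.1 (f.map_adj h), fun _ _ _ _ hab hxy e =>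
    hf hab hxy (by simpa using hc.2 (f.map_adj hab) (f.map_adj hxy) e)⟩

end IsHarmonious

section hchrom

variable {V W : Type*} [Fintype V] [Fintype W] {G : SimpleGraph V} {H : SimpleGraph W}

lemma hchrom_le_of_isHarmonious {k : ℕ} {c : V → Fin k} (hc : IsHarmonious G c) :
    hchrom G ≤ k :=
  Nat.sInf_le ⟨c, hc⟩

lemma exists_isHarmonious_fin_hchrom : ∃ c : V → Fin (hchrom G), IsHarmonious G c :=
  Nat.sInf_mem (s := {k | ∃ c : V → Fin k, IsHarmonious G c})
    ⟨_, _, .of_injective (Fintype.equivFin V).injective⟩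

lemma hchrom_le_of_hom (f : G →g H) (hf : Set.InjOn (Sym2.map f) G.edgeSet) :
    hchrom G ≤ hchrom H :=
  let ⟨_, hc⟩ := exists_isHarmonious_fin_hchrom (G := H)
  hchrom_le_of_isHarmonious (hc.comp f hf)

end hchrom

section identify

variable {V : Type*} [DecidableEq V] {G : SimpleGraph V} {u v : V}

def identifyMap (huv : u ≠ v) (x : V) : {x : V // x ≠ v} :=
  if h : x = v then ⟨u, huv⟩ else ⟨x, h⟩

lemma identifyMap_val (huv : u ≠ v) (x : V) :
    (identifyMap huv x).1 = if x = v then u else x := by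
  unfold identifyMap; split_ifs <;> rfl

lemma identifyMap_eq_identifyMap_iff (huv : u ≠ v) {a b : V} :
    identifyMap huv a = identifyMap huv b ↔ a = b ∨ a = v ∧ b = u ∨ a = u ∧ b = v := by
  rw [Subtype.ext_iff, identifyMap_val, identifyMap_val]
  split_ifs <;> grind

def identifyHom (huv : u ≠ v) (hadj : ¬ G.Adj u v) : G →g identify G u v where
  toFun := identifyMap huv
  map_rel' {a b} hab := by
    refine ⟨fun h => ?_, ?_⟩
    · rcases (identifyMap_eq_identifyMap_iff huv).1 h with rfl | ⟨rfl, rfl⟩ | ⟨rfl, rfl⟩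
      exacts [hab.ne rfl, hadj hab.symm, hadj hab]
    · simp only [identifyMap_val]
      split_ifs <;> grind [SimpleGraph.Adj.symm, SimpleGraph.irrefl]

lemma injOn_sym2Map_identifyHom (h : DistAtLeastThree G u v) :
    Set.InjOn (Sym2.map (identifyHom h.1 h.2.1)) G.edgeSet := by
  obtain ⟨huv, hadj, hcommon⟩ := h
  rintro ⟨a, b⟩ hab ⟨x, y⟩ hxy e
  rw [SimpleGraph.mem_edgeSet] at hab hxy
  simp only [Sym2.map_mk, Sym2.eq_iff] at e ⊢
  rcases e with ⟨e₁, e₂⟩ | ⟨e₁, e₂⟩ <;>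
    rcases (identifyMap_eq_identifyMap_iff huv).1 e₁ with rfl | ⟨rfl, rfl⟩ | ⟨rfl, rfl⟩ <;>
    rcases (identifyMap_eq_identifyMap_iff huv).1 e₂ with rfl | ⟨rfl, rfl⟩ | ⟨rfl, rfl⟩ <;>
    grind [SimpleGraph.Adj.symm, SimpleGraph.irrefl]

end identify

theorem stmt8 {V : Type*} [Fintype V] [DecidableEq V] (G : SimpleGraph V)
    (u v : V) (huv : DistAtLeastThree G u v) :
    hchrom G ≤ hchrom (identify G u v) :=
  hchrom_le_of_hom _ (injOn_sym2Map_identifyHom huv)
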